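/- arXiv:2508.21196 — 2 statements merged into one kernel-verified Lean document; each statement's English description precedes it below -/
import Mathlib

section
/- Let α and β be measurable spaces, and let ν be a probability measure on α × β which is absolutely continuous with respect to the product ν.fst ⊗ ν.snd of its two marginals, with Radon–Nikodym derivative bounded above by e^c for some constant c ≥ 0, (ν.fst ⊗ ν.snd)-almost everywhere. Then for every probability measure μ on α × β one has KL(μ‖ν) ≥ KL(μ.fst‖ν.fst) + KL(μ.snd‖ν.snd) − c (as an inequality in [0,∞] with the convention ∞ − c = ∞). -/
open MeasureTheory
open scoped ENNReal NNReal

open Classical in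
/-- The Kullback–Leibler divergence `KL(μ‖ν) ∈ [0,∞]`: it is `∫ log(dμ/dν) dμ` if `μ ≪ ν`
and the log-likelihood ratio is `μ`-integrable, and `+∞` otherwise. -/
noncomputable def klDiv {X : Type*} [MeasurableSpace X] (μ ν : Measure X) : ℝ≥0∞ :=
  if μ ≪ ν ∧ Integrable (fun x => Real.log ((μ.rnDeriv ν x).toReal)) μ
  then ENNReal.ofReal (∫ x, Real.log ((μ.rnDeriv ν x).toReal) ∂μ)
  else ⊤

/-!
Write `L = ν.fst ⊗ ν.snd` and `P = μ.fst ⊗ μ.snd`. Since `dP/dL (x, y)` is the product of the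
densities of the marginals, `KL(μ.fst‖ν.fst) + KL(μ.snd‖ν.snd) = ∫ log (dP/dL) dμ`, and
`log t ≤ t - 1` at `t = dP/dμ` bounds this by `∫ log (dμ/dL) dμ = KL(μ‖L)`. Finally
`log (dμ/dL) = log (dμ/dν) + log (dν/dL) ≤ log (dμ/dν) + c`, so `KL(μ‖L) ≤ KL(μ‖ν) + c`.
The negative part of a log-likelihood ratio is always integrable, so each of these pointwise
upper bounds by an integrable function also yields the integrability needed for `KL < ∞`.
-/

open Real Measure

section LogLikelihoodRatio

variable {X : Type*} [MeasurableSpace X] {μ ν L : Measure X}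

lemma klDiv_of_ac_of_integrable (hac : μ ≪ ν) (hint : Integrable (llr μ ν) μ) :
    klDiv μ ν = ENNReal.ofReal (∫ x, llr μ ν x ∂μ) :=
  if_pos ⟨hac, hint⟩

lemma klDiv_of_not_ac_and_integrable (h : ¬(μ ≪ ν ∧ Integrable (llr μ ν) μ)) :
    klDiv μ ν = ∞ :=
  if_neg h

lemma integral_llr_nonneg [IsProbabilityMeasure μ] [IsProbabilityMeasure ν] (hac : μ ≪ ν)
    (hint : Integrable (llr μ ν) μ) : 0 ≤ ∫ x, llr μ ν x ∂μ := by
  simpa using InformationTheory.integral_llr_add_sub_measure_univ_nonneg hac hint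

/-- Integrable because `t * min (log t) 0 = min (t * log t) 0 ∈ [-1, 0]` for `t ≥ 0`. -/
lemma integrable_min_llr_zero [SigmaFinite μ] [IsFiniteMeasure ν] (hac : μ ≪ ν) :
    Integrable (fun x => min (llr μ ν x) 0) μ := by
  rw [← integrable_toReal_rnDeriv_mul_iff hac]
  refine Integrable.of_bound ?_ 1 (ae_of_all _ fun x => ?_)
  · exact ((measurable_rnDeriv μ ν).ennreal_toReal.mul
      ((measurable_llr μ ν).min measurable_const)).aestronglyMeasurable
  have ht : 0 ≤ (μ.rnDeriv ν x).toReal := ENNReal.toReal_nonneg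
  rw [llr_def, mul_min_of_nonneg _ _ ht, mul_zero, Real.norm_eq_abs, abs_le]
  exact ⟨le_min (by linarith [self_sub_one_le_mul_log ht]) (by norm_num),
    (min_le_right _ _).trans zero_le_one⟩

lemma integrable_of_add_le {f₁ f₂ g : X → ℝ}
    (hf₁ : AEStronglyMeasurable f₁ μ) (hmin₁ : Integrable (fun x => min (f₁ x) 0) μ)
    (hmin₂ : Integrable (fun x => min (f₂ x) 0) μ) (hg : Integrable g μ)
    (hle : ∀ᵐ x ∂μ, f₁ x + f₂ x ≤ g x) : Integrable f₁ μ := by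
  refine integrable_of_le_of_le hf₁ (ae_of_all _ fun _ => min_le_left _ _) ?_ hmin₁
    (hg.sub hmin₂)
  filter_upwards [hle] with x hx
  simp only [Pi.sub_apply]
  linarith [min_le_left (f₂ x) 0]

lemma llr_ae_eq_llr_add_llr [SigmaFinite μ] [SigmaFinite ν] [SigmaFinite L] (hμν : μ ≪ ν)
    (hνL : ν ≪ L) : llr μ L =ᵐ[μ] fun x => llr μ ν x + llr ν L x := by
  have hμL := hμν.trans hνL
  filter_upwards [hμL.ae_le (rnDeriv_mul_rnDeriv hμν), rnDeriv_pos hμν,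
    hμν.ae_le (rnDeriv_lt_top μ ν), hμν.ae_le (rnDeriv_pos hνL),
    hμL.ae_le (rnDeriv_lt_top ν L)] with x hmul h₁ h₁' h₂ h₂'
  simp only [llr_def, ← hmul, Pi.mul_apply, ENNReal.toReal_mul]
  exact log_mul (ENNReal.toReal_pos h₁.ne' h₁'.ne).ne' (ENNReal.toReal_pos h₂.ne' h₂'.ne).ne'

theorem klDiv_le_klDiv_add_of_rnDeriv_le [IsProbabilityMeasure μ] [SigmaFinite ν]
    [IsFiniteMeasure L] {c : ℝ} (hνL : ν ≪ L)
    (hbound : ∀ᵐ x ∂L, ν.rnDeriv L x ≤ ENNReal.ofReal (exp c)) :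
    klDiv μ L ≤ klDiv μ ν + ENNReal.ofReal c := by
  by_cases h : μ ≪ ν ∧ Integrable (llr μ ν) μ
  swap
  · rw [klDiv_of_not_ac_and_integrable h, _root_.top_add]
    exact le_top
  obtain ⟨hμν, hint⟩ := h
  have hμL := hμν.trans hνL
  have hle : llr μ L ≤ᵐ[μ] fun x => llr μ ν x + c := by
    filter_upwards [llr_ae_eq_llr_add_llr hμν hνL, hμν.ae_le (rnDeriv_pos hνL),
      hμL.ae_le hbound] with x heq hpos hx
    have hlt : ν.rnDeriv L x ≠ ∞ := ne_top_of_le_ne_top ENNReal.ofReal_ne_top hx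
    rw [heq, add_le_add_iff_left, llr_def, log_le_iff_le_exp (ENNReal.toReal_pos hpos.ne' hlt)]
    exact ENNReal.toReal_le_of_le_ofReal (exp_pos c).le hx
  have hintL : Integrable (llr μ L) μ :=
    integrable_of_le_of_le (measurable_llr _ _).aestronglyMeasurable
      (ae_of_all _ fun _ => min_le_left _ _) hle (integrable_min_llr_zero hμL)
      (hint.add (integrable_const c))
  have hintegral : ∫ x, llr μ L x ∂μ ≤ ∫ x, llr μ ν x ∂μ + c := by
    calc ∫ x, llr μ L x ∂μ ≤ ∫ x, llr μ ν x + c ∂μ :=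
          integral_mono_ae hintL (hint.add (integrable_const c)) hle
      _ = ∫ x, llr μ ν x ∂μ + c := by simp [integral_add hint (integrable_const c)]
  rw [klDiv_of_ac_of_integrable hμL hintL, klDiv_of_ac_of_integrable hμν hint]
  exact (ENNReal.ofReal_le_ofReal hintegral).trans ENNReal.ofReal_add_le

end LogLikelihoodRatio

section Gibbs

variable {X : Type*} [MeasurableSpace X] {μ P L : Measure X}

lemma lintegral_rnDeriv_div_rnDeriv_le [SigmaFinite μ] [SigmaFinite L] (hμL : μ ≪ L) :
    ∫⁻ x, P.rnDeriv L x / μ.rnDeriv L x ∂μ ≤ P Set.univ := by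
  rw [← lintegral_rnDeriv_mul hμL (f := fun x => P.rnDeriv L x / μ.rnDeriv L x)
    ((measurable_rnDeriv P L).div (measurable_rnDeriv μ L)).aemeasurable]
  calc ∫⁻ x, μ.rnDeriv L x * (P.rnDeriv L x / μ.rnDeriv L x) ∂L
      ≤ ∫⁻ x, P.rnDeriv L x ∂L := lintegral_mono fun _ => ENNReal.mul_div_le
    _ ≤ P Set.univ := lintegral_rnDeriv_le

/-- The majorant is `log (dμ/dL) + (dP/dL) / (dμ/dL) - 1`: `log t ≤ t - 1` at `t = dP/dμ`. -/
lemma exists_integrable_ge_llr [IsProbabilityMeasure μ] [IsProbabilityMeasure P] [SigmaFinite L]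
    (hμL : μ ≪ L) (hint : Integrable (llr μ L) μ)
    (hpos : ∀ᵐ x ∂μ, 0 < (P.rnDeriv L x).toReal) :
    ∃ g : X → ℝ, Integrable g μ ∧ ∫ x, g x ∂μ ≤ ∫ x, llr μ L x ∂μ ∧ llr P L ≤ᵐ[μ] g := by
  set r : X → ℝ≥0∞ := fun x => P.rnDeriv L x / μ.rnDeriv L x
  have hr : Measurable r := (measurable_rnDeriv P L).div (measurable_rnDeriv μ L)
  have hr_le : ∫⁻ x, r x ∂μ ≤ 1 := (lintegral_rnDeriv_div_rnDeriv_le hμL).trans_eq measure_univ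
  have hr_ne_top : ∫⁻ x, r x ∂μ ≠ ∞ := ne_top_of_le_ne_top ENNReal.one_ne_top hr_le
  have hr_int : Integrable (fun x => (r x).toReal) μ :=
    integrable_toReal_of_lintegral_ne_top hr.aemeasurable hr_ne_top
  have hr_integral : ∫ x, (r x).toReal ∂μ ≤ 1 := by
    rw [integral_toReal hr.aemeasurable (ae_lt_top hr hr_ne_top)]
    exact ENNReal.toReal_le_of_le_ofReal zero_le_one (by simpa using hr_le)
  have hr_sub_int : Integrable (fun x => (r x).toReal - 1) μ := hr_int.sub (integrable_const 1)
  refine ⟨fun x => llr μ L x + ((r x).toReal - 1), hint.add hr_sub_int, ?_, ?_⟩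
  · rw [integral_add hint hr_sub_int,
      integral_sub hr_int (integrable_const 1), integral_const, probReal_univ, one_smul]
    linarith
  · filter_upwards [hpos, rnDeriv_pos hμL, hμL.ae_le (rnDeriv_lt_top μ L)] with x hp hq hq'
    have hq : 0 < (μ.rnDeriv L x).toReal := ENNReal.toReal_pos hq.ne' hq'.ne
    have hlog := log_le_sub_one_of_pos (div_pos hp hq)
    rw [log_div hp.ne' hq.ne'] at hlog
    simp only [llr_def, r, ENNReal.toReal_div]
    linarith

end Gibbs

section Product

variable {α β : Type*} [MeasurableSpace α] [MeasurableSpace β]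

lemma rnDeriv_prod_ae_eq {μ₁ ν₁ : Measure α} {μ₂ ν₂ : Measure β}
    [SigmaFinite μ₁] [SigmaFinite μ₂] [SigmaFinite ν₁] [SigmaFinite ν₂]
    (h₁ : μ₁ ≪ ν₁) (h₂ : μ₂ ≪ ν₂) :
    (μ₁.prod μ₂).rnDeriv (ν₁.prod ν₂)
      =ᵐ[ν₁.prod ν₂] fun z => μ₁.rnDeriv ν₁ z.1 * μ₂.rnDeriv ν₂ z.2 := by
  have hprod : μ₁.prod μ₂
      = (ν₁.prod ν₂).withDensity (fun z => μ₁.rnDeriv ν₁ z.1 * μ₂.rnDeriv ν₂ z.2) := by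
    refine prod_eq fun s t hs ht => ?_
    rw [withDensity_apply _ (hs.prod ht), ← prod_restrict,
      lintegral_prod_mul (measurable_rnDeriv _ _).aemeasurable
        (measurable_rnDeriv _ _).aemeasurable,
      setLIntegral_rnDeriv' h₁ hs, setLIntegral_rnDeriv' h₂ ht]
  rw [hprod]
  exact rnDeriv_withDensity₀ _ (by fun_prop)

lemma fst_absolutelyContinuous_of_absolutelyContinuous_prod {μ : Measure (α × β)}
    {ρ₁ : Measure α} {ρ₂ : Measure β} [SFinite ρ₂] (h : μ ≪ ρ₁.prod ρ₂) : μ.fst ≪ ρ₁ :=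
  (h.map measurable_fst).trans (by rw [map_fst_prod]; exact smul_absolutelyContinuous)

lemma snd_absolutelyContinuous_of_absolutelyContinuous_prod {μ : Measure (α × β)}
    {ρ₁ : Measure α} {ρ₂ : Measure β} [SFinite ρ₂] (h : μ ≪ ρ₁.prod ρ₂) : μ.snd ≪ ρ₂ :=
  (h.map measurable_snd).trans (by rw [map_snd_prod]; exact smul_absolutelyContinuous)

lemma ae_toReal_rnDeriv_map_pos {X : Type*} [MeasurableSpace X] {μ : Measure X}
    [IsFiniteMeasure μ] {g : X → α} (hg : Measurable g) {ρ : Measure α} [SigmaFinite ρ]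
    (h : μ.map g ≪ ρ) : ∀ᵐ x ∂μ, 0 < ((μ.map g).rnDeriv ρ (g x)).toReal :=
  ae_of_ae_map hg.aemeasurable <| by
    filter_upwards [rnDeriv_pos h, h.ae_le (rnDeriv_lt_top (μ.map g) ρ)] with y hpos hlt
    exact ENNReal.toReal_pos hpos.ne' hlt.ne

lemma ae_llr_prod_eq {μ : Measure (α × β)} [IsFiniteMeasure μ] {ρ₁ : Measure α}
    {ρ₂ : Measure β} [SigmaFinite ρ₁] [SigmaFinite ρ₂] (h : μ ≪ ρ₁.prod ρ₂) :
    ∀ᵐ z ∂μ, 0 < ((μ.fst.prod μ.snd).rnDeriv (ρ₁.prod ρ₂) z).toReal ∧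
      llr (μ.fst.prod μ.snd) (ρ₁.prod ρ₂) z = llr μ.fst ρ₁ z.1 + llr μ.snd ρ₂ z.2 := by
  have h₁ := fst_absolutelyContinuous_of_absolutelyContinuous_prod h
  have h₂ := snd_absolutelyContinuous_of_absolutelyContinuous_prod h
  filter_upwards [ae_toReal_rnDeriv_map_pos measurable_fst h₁,
    ae_toReal_rnDeriv_map_pos measurable_snd h₂, h.ae_le (rnDeriv_prod_ae_eq h₁ h₂)]
    with z hpos₁ hpos₂ hprod
  simp only [llr_def]
  rw [hprod, ENNReal.toReal_mul]
  exact ⟨mul_pos hpos₁ hpos₂, log_mul hpos₁.ne' hpos₂.ne'⟩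

theorem klDiv_fst_add_klDiv_snd_le_klDiv_prod (μ : Measure (α × β)) [IsProbabilityMeasure μ]
    (ρ₁ : Measure α) (ρ₂ : Measure β) [IsProbabilityMeasure ρ₁] [IsProbabilityMeasure ρ₂] :
    klDiv μ.fst ρ₁ + klDiv μ.snd ρ₂ ≤ klDiv μ (ρ₁.prod ρ₂) := by
  by_cases h : μ ≪ ρ₁.prod ρ₂ ∧ Integrable (llr μ (ρ₁.prod ρ₂)) μ
  swap
  · rw [klDiv_of_not_ac_and_integrable h]
    exact le_top
  obtain ⟨hac, hint⟩ := h
  have h₁ := fst_absolutelyContinuous_of_absolutelyContinuous_prod hac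
  have h₂ := snd_absolutelyContinuous_of_absolutelyContinuous_prod hac
  obtain ⟨g, hg, hg_integral, hllr_le⟩ :=
    exists_integrable_ge_llr hac hint ((ae_llr_prod_eq hac).mono fun _ hz => hz.1)
  have hle : ∀ᵐ z ∂μ, llr μ.fst ρ₁ z.1 + llr μ.snd ρ₂ z.2 ≤ g z := by
    filter_upwards [ae_llr_prod_eq hac, hllr_le] with z hz hgz
    exact hz.2 ▸ hgz
  have hmin₁ := (integrable_min_llr_zero h₁).comp_measurable measurable_fst
  have hmin₂ := (integrable_min_llr_zero h₂).comp_measurable measurable_snd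
  have hint₁ : Integrable (fun z : α × β => llr μ.fst ρ₁ z.1) μ :=
    integrable_of_add_le ((measurable_llr _ _).comp measurable_fst).aestronglyMeasurable
      hmin₁ hmin₂ hg hle
  have hint₂ : Integrable (fun z : α × β => llr μ.snd ρ₂ z.2) μ :=
    integrable_of_add_le ((measurable_llr _ _).comp measurable_snd).aestronglyMeasurable
      hmin₂ hmin₁ hg (by simpa only [add_comm] using hle)
  have hint₁' : Integrable (llr μ.fst ρ₁) μ.fst :=
    (integrable_map_measure (by fun_prop) measurable_fst.aemeasurable).mpr hint₁
  have hint₂' : Integrable (llr μ.snd ρ₂) μ.snd :=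
    (integrable_map_measure (by fun_prop) measurable_snd.aemeasurable).mpr hint₂
  rw [klDiv_of_ac_of_integrable h₁ hint₁', klDiv_of_ac_of_integrable h₂ hint₂',
    klDiv_of_ac_of_integrable hac hint, ← ENNReal.ofReal_add (integral_llr_nonneg h₁ hint₁')
      (integral_llr_nonneg h₂ hint₂')]
  refine ENNReal.ofReal_le_ofReal ?_
  calc ∫ x, llr μ.fst ρ₁ x ∂μ.fst + ∫ y, llr μ.snd ρ₂ y ∂μ.snd
      = ∫ z, llr μ.fst ρ₁ z.1 + llr μ.snd ρ₂ z.2 ∂μ := by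
        rw [integral_add hint₁ hint₂, Measure.fst, Measure.snd,
          integral_map measurable_fst.aemeasurable (by fun_prop),
          integral_map measurable_snd.aemeasurable (by fun_prop)]
    _ ≤ ∫ z, g z ∂μ := integral_mono_ae (hint₁.add hint₂) hg hle
    _ ≤ ∫ z, llr μ (ρ₁.prod ρ₂) z ∂μ := hg_integral

end Product

theorem quasi_superadditivity_of_KL_general
    {α β : Type*} [MeasurableSpace α] [MeasurableSpace β]
    (ν : Measure (α × β)) [IsProbabilityMeasure ν]
    (c : ℝ)
    (hac : ν ≪ ν.fst.prod ν.snd)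
    (hbound : ∀ᵐ x ∂(ν.fst.prod ν.snd),
      ν.rnDeriv (ν.fst.prod ν.snd) x ≤ ENNReal.ofReal (Real.exp c)) :
    ∀ (μ : Measure (α × β)), IsProbabilityMeasure μ →
      klDiv μ.fst ν.fst + klDiv μ.snd ν.snd - ENNReal.ofReal c ≤ klDiv μ ν := by
  intro μ _
  rw [tsub_le_iff_right]
  calc klDiv μ.fst ν.fst + klDiv μ.snd ν.snd ≤ klDiv μ (ν.fst.prod ν.snd) :=
        klDiv_fst_add_klDiv_snd_le_klDiv_prod μ ν.fst ν.snd
    _ ≤ klDiv μ ν + ENNReal.ofReal c := klDiv_le_klDiv_add_of_rnDeriv_le hac hbound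

theorem quasi_superadditivity_of_KL
    {α β : Type*} [MeasurableSpace α] [MeasurableSpace β]
    (ν : Measure (α × β)) [IsProbabilityMeasure ν]
    (c : ℝ) (hc : 0 ≤ c)
    (hac : ν ≪ ν.fst.prod ν.snd)
    (hbound : ∀ᵐ x ∂(ν.fst.prod ν.snd),
      ν.rnDeriv (ν.fst.prod ν.snd) x ≤ ENNReal.ofReal (Real.exp c)) :
    ∀ (μ : Measure (α × β)), IsProbabilityMeasure μ →
      klDiv μ.fst ν.fst + klDiv μ.snd ν.snd - ENNReal.ofReal c ≤ klDiv μ ν :=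
  quasi_superadditivity_of_KL_general ν c hac hbound
end

section
/- Let E be a nonempty finite type, let Q be an E × E real matrix with Q(x,y) ≥ 0 for all x ≠ y and ∑_y Q(x,y) = 0 for all x, and assume Q is irreducible in the sense that for every t > 0 all entries of the matrix exponential exp(t·Q) are strictly positive. Let μ : E → ℝ be a strictly positive probability vector which is stationary for Q, i.e., ∑_x μ(x)·Q(x,y) = 0 for all y, and let ν : E → ℝ be a probability vector. Define ν_t(x) = ∑_y ν(y)·(exp(t·Q))(y,x) and h(t) = ∑_x ν_t(x)·log(ν_t(x)/μ(x)) (with 0·log 0 = 0). If h(t) = h(0) for all t ≥ 0, then ν = μ. -/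
/-!
Let `P = exp Q` be the time-one transition matrix: its rows sum to one, `μ P = μ`, and
irreducibility makes all its entries positive. With `φ z = z log z` one has
`h(p|μ) = ∑ₓ μ x φ(p x / μ x)`, and `(νP)/μ` at `x` is the average of `ν/μ` under the strictly
positive weights `μ y P y x / μ x`. Strict convexity of `φ` then gives `h(νP|μ) < h(ν|μ)` unless
`ν/μ` is constant, i.e. unless `ν = μ`.
-/

open scoped Matrix
open Finset Real

section

variable {E : Type*} [Fintype E]

namespace Matrix

variable [DecidableEq E]

theorem exp_mulVec_eq_self {A : Matrix E E ℝ} {v : E → ℝ} (hv : A *ᵥ v = 0) :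
    NormedSpace.exp A *ᵥ v = v := by
  open scoped Norms.Operator in
  have hexp := (NormedSpace.exp_series_hasSum_exp' (𝕂 := ℝ) A).map
    ((mulVecBilin ℝ ℝ).flip v) (continuous_id.matrix_mulVec continuous_const)
  have hterms : HasSum (fun n : ℕ => ((n.factorial : ℝ)⁻¹ • A ^ n) *ᵥ v) v := by
    convert hasSum_single 0 fun n hn => ?_
    · simp
    · obtain ⟨n, rfl⟩ := Nat.exists_eq_succ_of_ne_zero hn
      simp [smul_mulVec, pow_succ, ← mulVec_mulVec, hv]
  exact hexp.unique hterms

theorem vecMul_exp_eq_self {A : Matrix E E ℝ} {v : E → ℝ} (hv : v ᵥ* A = 0) :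
    v ᵥ* NormedSpace.exp A = v := by
  rw [← mulVec_transpose, ← exp_transpose]
  exact exp_mulVec_eq_self (by rwa [mulVec_transpose])

theorem sum_exp_apply_eq_one {A : Matrix E E ℝ} (hA : ∀ x, ∑ y, A x y = 0) (x : E) :
    ∑ y, NormedSpace.exp A x y = 1 := by
  have hA' : A *ᵥ 1 = 0 := funext fun x => by simpa [mulVec, dotProduct] using hA x
  simpa [mulVec, dotProduct] using congrFun (exp_mulVec_eq_self hA') x

end Matrix

noncomputable def relEntropy (p μ : E → ℝ) : ℝ :=
  ∑ x, p x * log (p x / μ x)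

theorem relEntropy_eq_sum_mul_mul_log {p μ : E → ℝ} (hμ : ∀ x, μ x ≠ 0) :
    relEntropy p μ = ∑ x, μ x * (p x / μ x * log (p x / μ x)) := by
  refine sum_congr rfl fun x _ => ?_
  rw [← mul_assoc, mul_div_cancel₀ _ (hμ x)]

theorem exists_div_ne_div_of_ne {p μ : E → ℝ} (hμ : ∀ x, μ x ≠ 0)
    (hμsum : ∑ x, μ x ≠ 0) (hsum : ∑ x, p x = ∑ x, μ x) (hne : p ≠ μ) :
    ∃ j k, p j / μ j ≠ p k / μ k := by
  by_contra! hconst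
  obtain ⟨x₀, -, -⟩ := exists_ne_zero_of_sum_ne_zero hμsum
  have hp : p = (p x₀ / μ x₀) • μ := funext fun x => by
    rw [Pi.smul_apply, smul_eq_mul, ← hconst x x₀, div_mul_cancel₀ _ (hμ x)]
  have hc : p x₀ / μ x₀ = 1 := by
    rw [hp] at hsum
    simpa [← mul_sum, hμsum] using hsum
  exact hne (by rw [hp, hc, one_smul])

theorem relEntropy_vecMul_lt {P : Matrix E E ℝ} (hP : ∀ x y, 0 < P x y)
    (hProw : ∀ x, ∑ y, P x y = 1) {μ ν : E → ℝ} (hμ : ∀ x, 0 < μ x) (hμP : μ ᵥ* P = μ)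
    (hν : ∀ x, 0 ≤ ν x) (hne : ∃ j k, ν j / μ j ≠ ν k / μ k) :
    relEntropy (ν ᵥ* P) μ < relEntropy ν μ := by
  have hμne x := (hμ x).ne'
  have hjensen (x : E) : (ν ᵥ* P) x / μ x * log ((ν ᵥ* P) x / μ x) <
      ∑ y, μ y * P y x / μ x * (ν y / μ y * log (ν y / μ y)) := by
    have hw : ∑ y, μ y * P y x / μ x = 1 := by
      rw [← sum_div, div_eq_one_iff_eq (hμne x)]
      exact congrFun hμP x
    have havg : (ν ᵥ* P) x / μ x = ∑ y, (μ y * P y x / μ x) • (ν y / μ y) := by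
      simp only [Matrix.vecMul, dotProduct, sum_div, smul_eq_mul]
      refine sum_congr rfl fun y _ => ?_
      have := hμne y
      field_simp
    obtain ⟨j, k, hjk⟩ := hne
    rw [havg]
    exact strictConvexOn_mul_log.map_sum_lt
      (fun y _ => div_pos (mul_pos (hμ y) (hP y x)) (hμ x)) hw
      (fun y _ => Set.mem_Ici.2 (div_nonneg (hν y) (hμ y).le))
      ⟨j, mem_univ j, k, mem_univ k, hjk⟩
  obtain ⟨j, -⟩ := hne
  calc relEntropy (ν ᵥ* P) μ
      = ∑ x, μ x * ((ν ᵥ* P) x / μ x * log ((ν ᵥ* P) x / μ x)) :=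
        relEntropy_eq_sum_mul_mul_log hμne
    _ < ∑ x, μ x * ∑ y, μ y * P y x / μ x * (ν y / μ y * log (ν y / μ y)) :=
        sum_lt_sum_of_nonempty ⟨j, mem_univ j⟩ fun x _ =>
          mul_lt_mul_of_pos_left (hjensen x) (hμ x)
    _ = ∑ x, ∑ y, P y x * (μ y * (ν y / μ y * log (ν y / μ y))) := by
        refine sum_congr rfl fun x _ => ?_
        rw [mul_sum]
        refine sum_congr rfl fun y _ => ?_
        have := hμne x
        field_simp
    _ = ∑ y, μ y * (ν y / μ y * log (ν y / μ y)) := by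
        rw [sum_comm]
        simp_rw [← sum_mul, hProw, one_mul]
    _ = relEntropy ν μ := (relEntropy_eq_sum_mul_mul_log hμne).symm

end

theorem relative_entropy_constant_implies_stationary_general
    {E : Type*} [Fintype E] [DecidableEq E]
    (Q : Matrix E E ℝ)
    (hQrow : ∀ x, ∑ y, Q x y = 0)
    (hirr : ∀ t : ℝ, 0 < t → ∀ x y, 0 < (NormedSpace.exp (t • Q)) x y)
    (μ : E → ℝ) (hμpos : ∀ x, 0 < μ x) (hμsum : ∑ x, μ x = 1)
    (hstat : ∀ y, ∑ x, μ x * Q x y = 0)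
    (ν : E → ℝ) (hνnonneg : ∀ x, 0 ≤ ν x) (hνsum : ∑ x, ν x = 1)
    (hconst : ∀ t : ℝ, 0 ≤ t →
      (∑ x, (∑ y, ν y * (NormedSpace.exp (t • Q)) y x) *
          Real.log ((∑ y, ν y * (NormedSpace.exp (t • Q)) y x) / μ x))
        = (∑ x, (∑ y, ν y * (NormedSpace.exp ((0 : ℝ) • Q)) y x) *
          Real.log ((∑ y, ν y * (NormedSpace.exp ((0 : ℝ) • Q)) y x) / μ x))) :
    ν = μ := by
  have hProw := Matrix.sum_exp_apply_eq_one (A := (1 : ℝ) • Q) (by simpa using hQrow)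
  have hμP : μ ᵥ* NormedSpace.exp ((1 : ℝ) • Q) = μ :=
    Matrix.vecMul_exp_eq_self (funext fun y => by simpa [Matrix.vecMul, dotProduct] using hstat y)
  have hentropy : relEntropy (ν ᵥ* NormedSpace.exp ((1 : ℝ) • Q)) μ = relEntropy ν μ := by
    have h := hconst 1 zero_le_one
    rw [zero_smul, NormedSpace.exp_zero] at h
    simpa [Matrix.one_apply, relEntropy, Matrix.vecMul, dotProduct] using h
  by_contra hne
  refine (relEntropy_vecMul_lt (hirr 1 one_pos) hProw hμpos hμP hνnonneg ?_).ne hentropy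
  exact exists_div_ne_div_of_ne (fun x => (hμpos x).ne') (by simp [hμsum]) (by rw [hνsum, hμsum]) hne

/-- Strict Lyapunov property of the relative entropy for finite-state irreducible
continuous-time Markov chains: if the relative entropy is constant in time, then the
initial distribution is the stationary one. -/
theorem relative_entropy_constant_implies_stationary
    {E : Type*} [Fintype E] [DecidableEq E] [Nonempty E]
    (Q : Matrix E E ℝ)
    (hQoff : ∀ x y, x ≠ y → 0 ≤ Q x y)
    (hQrow : ∀ x, ∑ y, Q x y = 0)
    (hirr : ∀ t : ℝ, 0 < t → ∀ x y, 0 < (NormedSpace.exp (t • Q)) x y)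
    (μ : E → ℝ) (hμpos : ∀ x, 0 < μ x) (hμsum : ∑ x, μ x = 1)
    (hstat : ∀ y, ∑ x, μ x * Q x y = 0)
    (ν : E → ℝ) (hνnonneg : ∀ x, 0 ≤ ν x) (hνsum : ∑ x, ν x = 1)
    (hconst : ∀ t : ℝ, 0 ≤ t →
      (∑ x, (∑ y, ν y * (NormedSpace.exp (t • Q)) y x) *
          Real.log ((∑ y, ν y * (NormedSpace.exp (t • Q)) y x) / μ x))
        = (∑ x, (∑ y, ν y * (NormedSpace.exp ((0 : ℝ) • Q)) y x) *
          Real.log ((∑ y, ν y * (NormedSpace.exp ((0 : ℝ) • Q)) y x) / μ x))) :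
    ν = μ :=
  relative_entropy_constant_implies_stationary_general Q hQrow hirr μ hμpos hμsum hstat ν hνnonneg
    hνsum hconst
end
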